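/- Converse for the limited-knowledge adversary (secret-size part of Theorem 1): let S and shares W_1, …, W_n be random variables on a common probability space taking values in finite sets, let z_ro, z_wo, z_rw ≥ 0 and k ≤ n be integers with k > 2z_rw + 2z_wo + z_ro, set z_r = z_ro + z_rw and z_w = z_wo + z_rw, and let α ≥ 0. Suppose H(W_i) ≤ α for every i, H(S | W_Z) = H(S) for every Z ⊆ {1,…,n} with |Z| = z_r, and H(S | W_B) = 0 for every B ⊆ {1,…,n} with |B| = k − z_w (the user can decode after discarding the z_w corrupted shares among any k contacted shares). Then H(S) ≤ (k − 2z_rw − z_wo − z_ro)·α. -/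

import Mathlib

open Finset

/-- The probability that the random variable `X` takes the value `a`, under the
probability mass function `p` on the finite sample space `Ω`. -/
noncomputable def probOf {Ω : Type*} [Fintype Ω] (p : Ω → ℝ) {A : Type*} [DecidableEq A]
    (X : Ω → A) (a : A) : ℝ :=
  ∑ ω ∈ Finset.univ.filter fun ω => X ω = a, p ω

/-- Shannon entropy of the random variable `X` with logarithm base `b`. -/
noncomputable def entropy {Ω : Type*} [Fintype Ω] (b : ℝ) (p : Ω → ℝ) {A : Type*}
    [Fintype A] [DecidableEq A] (X : Ω → A) : ℝ :=
  -∑ a : A, probOf p X a * Real.logb b (probOf p X a)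

/-- Conditional Shannon entropy `H(X | Y)` with logarithm base `b`,
defined by the chain rule `H(X | Y) = H(X, Y) - H(Y)`. -/
noncomputable def condEntropy {Ω : Type*} [Fintype Ω] (b : ℝ) (p : Ω → ℝ) {A B : Type*}
    [Fintype A] [DecidableEq A] [Fintype B] [DecidableEq B] (X : Ω → A) (Y : Ω → B) : ℝ :=
  entropy b p (fun ω => (X ω, Y ω)) - entropy b p Y

/-- The tuple `X_A = (X_i)_{i ∈ A}` of a family of random variables. -/
def tupleOn {Ω : Type*} {N : ℕ} {V : Fin N → Type*} (X : ∀ i, Ω → V i) (A : Finset (Fin N)) :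
    Ω → ∀ i : A, V i :=
  fun ω i => X i ω

section Helpers

variable {Ω : Type*} [Fintype Ω] {b : ℝ} {p : Ω → ℝ}

lemma probOf_nonneg (hp : ∀ ω, 0 ≤ p ω) {A : Type*} [DecidableEq A] (X : Ω → A) (a : A) :
    0 ≤ probOf p X a := Finset.sum_nonneg fun ω _ => hp ω

lemma sum_probOf (hp1 : ∑ ω, p ω = 1) {A : Type*} [Fintype A] [DecidableEq A] (X : Ω → A) :
    ∑ a, probOf p X a = 1 := by
  unfold probOf
  rw [Finset.sum_fiberwise Finset.univ X p, hp1]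

lemma probOf_snd {A B : Type*} [Fintype A] [DecidableEq A] [DecidableEq B]
    (X : Ω → A) (Y : Ω → B) (y : B) :
    probOf p Y y = ∑ x, probOf p (fun ω => (X ω, Y ω)) (x, y) := by
  unfold probOf
  rw [← Finset.sum_fiberwise (Finset.univ.filter fun ω => Y ω = y) X p]
  refine Finset.sum_congr rfl fun x _ => Finset.sum_congr ?_ fun _ _ => rfl
  ext ω
  simp [Prod.ext_iff, and_comm]

lemma probOf_fst {A B : Type*} [DecidableEq A] [Fintype B] [DecidableEq B]
    (X : Ω → A) (Y : Ω → B) (x : A) :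
    probOf p X x = ∑ y, probOf p (fun ω => (X ω, Y ω)) (x, y) := by
  unfold probOf
  rw [← Finset.sum_fiberwise (Finset.univ.filter fun ω => X ω = x) Y p]
  refine Finset.sum_congr rfl fun y _ => Finset.sum_congr ?_ fun _ _ => rfl
  ext ω
  simp [Prod.ext_iff]

lemma probOf_comp {A B : Type*} [DecidableEq A] [DecidableEq B] {e : A → B}
    (he : Function.Injective e) (X : Ω → A) (a : A) :
    probOf p (fun ω => e (X ω)) (e a) = probOf p X a := by
  unfold probOf
  refine Finset.sum_congr ?_ fun _ _ => rfl
  ext ω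
  simp [he.eq_iff]

lemma probOf_comp_eq_zero {A B : Type*} [DecidableEq B] (e : A → B) (X : Ω → A) {y : B}
    (hy : ∀ a, e a ≠ y) : probOf p (fun ω => e (X ω)) y = 0 := by
  unfold probOf
  rw [Finset.filter_false_of_mem fun ω _ => hy (X ω), Finset.sum_empty]

lemma entropy_comp_injective {A B : Type*} [Fintype A] [DecidableEq A] [Fintype B]
    [DecidableEq B] {e : A → B} (he : Function.Injective e) (X : Ω → A) :
    entropy b p (fun ω => e (X ω)) = entropy b p X := by
  unfold entropy
  congr 1
  have h0 : ∀ y ∈ (Finset.univ : Finset B), y ∉ Finset.image e Finset.univ →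
      probOf p (fun ω => e (X ω)) y * Real.logb b (probOf p (fun ω => e (X ω)) y) = 0 := by
    intro y _ hy
    rw [probOf_comp_eq_zero, zero_mul]
    intro a h
    exact hy (Finset.mem_image.mpr ⟨a, Finset.mem_univ a, h⟩)
  rw [← Finset.sum_subset (Finset.subset_univ _) h0,
    Finset.sum_image (fun a _ a' _ h => he h)]
  exact Finset.sum_congr rfl fun a _ => by rw [probOf_comp he]

lemma entropy_snd_le (hb : 1 < b) (hp : ∀ ω, 0 ≤ p ω) {A B : Type*} [Fintype A]
    [DecidableEq A] [Fintype B] [DecidableEq B] (X : Ω → A) (Y : Ω → B) :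
    entropy b p Y ≤ entropy b p (fun ω => (X ω, Y ω)) := by
  unfold entropy
  rw [neg_le_neg_iff, Fintype.sum_prod_type_right]
  refine Finset.sum_le_sum fun y _ => ?_
  rw [probOf_snd X Y y, Finset.sum_mul]
  refine Finset.sum_le_sum fun x _ => ?_
  set r := probOf p (fun ω => (X ω, Y ω)) (x, y) with hr
  have hr0 : 0 ≤ r := probOf_nonneg hp _ _
  rcases eq_or_lt_of_le hr0 with h | h
  · simp [← h]
  · refine mul_le_mul_of_nonneg_left (Real.logb_le_logb_of_le hb h ?_) hr0
    exact Finset.single_le_sum (fun x' _ => probOf_nonneg hp (fun ω => (X ω, Y ω)) (x', y)) (Finset.mem_univ x)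

lemma entropy_pair_le (hb : 1 < b) (hp : ∀ ω, 0 ≤ p ω) (hp1 : ∑ ω, p ω = 1)
    {A B : Type*} [Fintype A] [DecidableEq A] [Fintype B] [DecidableEq B]
    (X : Ω → A) (Y : Ω → B) :
    entropy b p (fun ω => (X ω, Y ω)) ≤ entropy b p X + entropy b p Y := by
  have hlb : 0 < Real.log b := Real.log_pos hb
  set r : A → B → ℝ := fun x y => probOf p (fun ω => (X ω, Y ω)) (x, y) with hrdef
  have hr0 : ∀ x y, 0 ≤ r x y := fun x y => probOf_nonneg hp _ _
  have hrx : ∀ x y, r x y ≤ probOf p X x := by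
    intro x y
    rw [probOf_fst X Y x]
    exact Finset.single_le_sum (fun y' _ => hr0 x y') (Finset.mem_univ y)
  have hry : ∀ x y, r x y ≤ probOf p Y y := by
    intro x y
    rw [probOf_snd X Y y]
    exact Finset.single_le_sum (fun x' _ => hr0 x' y) (Finset.mem_univ x)
  have hpX : ∀ x, 0 ≤ probOf p X x := fun x => probOf_nonneg hp X x
  have hpY : ∀ y, 0 ≤ probOf p Y y := fun y => probOf_nonneg hp Y y
  -- termwise key inequality
  have key : ∀ x y,
      r x y * Real.logb b (probOf p X x) + r x y * Real.logb b (probOf p Y y)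
        - r x y * Real.logb b (r x y)
      ≤ (probOf p X x * probOf p Y y - r x y) / Real.log b := by
    intro x y
    rcases eq_or_lt_of_le (hr0 x y) with h | h
    · rw [← h]
      simp only [zero_mul, add_zero, sub_zero, zero_add, sub_zero]
      exact div_nonneg (mul_nonneg (hpX x) (hpY y)) hlb.le
    · have hx : 0 < probOf p X x := lt_of_lt_of_le h (hrx x y)
      have hy : 0 < probOf p Y y := lt_of_lt_of_le h (hry x y)
      have hcore : r x y * (Real.log (probOf p X x) + Real.log (probOf p Y y)
          - Real.log (r x y)) ≤ probOf p X x * probOf p Y y - r x y := by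
        have hl := Real.log_le_sub_one_of_pos
          (show 0 < probOf p X x * probOf p Y y / r x y by positivity)
        rw [Real.log_div (by positivity) h.ne', Real.log_mul hx.ne' hy.ne'] at hl
        have hmul := mul_le_mul_of_nonneg_left hl h.le
        have hexp : r x y * (probOf p X x * probOf p Y y / r x y - 1)
            = probOf p X x * probOf p Y y - r x y := by
          field_simp
        rw [hexp] at hmul
        exact hmul
      calc r x y * Real.logb b (probOf p X x) + r x y * Real.logb b (probOf p Y y)
            - r x y * Real.logb b (r x y)
          = r x y * (Real.log (probOf p X x) + Real.log (probOf p Y y)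
              - Real.log (r x y)) / Real.log b := by
            simp only [Real.logb]
            ring
        _ ≤ (probOf p X x * probOf p Y y - r x y) / Real.log b :=
            (div_le_div_iff_of_pos_right hlb).mpr hcore
  have hsum0 : ∑ x : A, ∑ y : B, (probOf p X x * probOf p Y y - r x y) = 0 := by
    have h1 : ∑ x : A, ∑ y : B, probOf p X x * probOf p Y y = 1 := by
      rw [← Finset.sum_mul_sum, sum_probOf hp1, sum_probOf hp1, one_mul]
    have h2 : ∑ x : A, ∑ y : B, r x y = 1 := by
      rw [← Fintype.sum_prod_type]
      exact sum_probOf hp1 _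
    simp only [Finset.sum_sub_distrib, h1, h2, sub_self]
  have main : ∑ x : A, ∑ y : B,
      (r x y * Real.logb b (probOf p X x) + r x y * Real.logb b (probOf p Y y)
        - r x y * Real.logb b (r x y)) ≤ 0 := by
    calc ∑ x : A, ∑ y : B, (r x y * Real.logb b (probOf p X x)
          + r x y * Real.logb b (probOf p Y y) - r x y * Real.logb b (r x y))
        ≤ ∑ x : A, ∑ y : B, (probOf p X x * probOf p Y y - r x y) / Real.log b :=
          Finset.sum_le_sum fun x _ => Finset.sum_le_sum fun y _ => key x y
      _ = (∑ x : A, ∑ y : B, (probOf p X x * probOf p Y y - r x y)) / Real.log b := by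
          simp only [← Finset.sum_div]
      _ = 0 := by rw [hsum0, zero_div]
  have e1 : ∑ x : A, probOf p X x * Real.logb b (probOf p X x)
      = ∑ x : A, ∑ y : B, r x y * Real.logb b (probOf p X x) := by
    refine Finset.sum_congr rfl fun x _ => ?_
    have h : ∑ y : B, r x y = probOf p X x := (probOf_fst X Y x).symm
    rw [← Finset.sum_mul, h]
  have e2 : ∑ y : B, probOf p Y y * Real.logb b (probOf p Y y)
      = ∑ x : A, ∑ y : B, r x y * Real.logb b (probOf p Y y) := by
    rw [Finset.sum_comm]
    refine Finset.sum_congr rfl fun y _ => ?_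
    have h : ∑ x : A, r x y = probOf p Y y := (probOf_snd X Y y).symm
    rw [← Finset.sum_mul, h]
  have e3 : ∑ c : A × B, probOf p (fun ω => (X ω, Y ω)) c
        * Real.logb b (probOf p (fun ω => (X ω, Y ω)) c)
      = ∑ x : A, ∑ y : B, r x y * Real.logb b (r x y) := by
    rw [Fintype.sum_prod_type]
  unfold entropy
  rw [e3]
  simp only [Finset.sum_add_distrib, Finset.sum_sub_distrib] at main
  rw [e1, e2]
  linarith

lemma entropy_comp_le (hb : 1 < b) (hp : ∀ ω, 0 ≤ p ω) {A B : Type*} [Fintype A]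
    [DecidableEq A] [Fintype B] [DecidableEq B] (g : A → B) (X : Ω → A) :
    entropy b p (fun ω => g (X ω)) ≤ entropy b p X := by
  have h1 := entropy_snd_le hb hp X (fun ω => g (X ω))
  have h2 : entropy b p (fun ω => (X ω, g (X ω))) = entropy b p X :=
    entropy_comp_injective (e := fun a => (a, g a)) (fun a a' h => congrArg Prod.fst h) X
  exact h1.trans h2.le

lemma entropy_tupleOn_le {n : ℕ} {V : Fin n → Type*} [∀ i, Fintype (V i)]
    [∀ i, DecidableEq (V i)] (hb : 1 < b) (hp : ∀ ω, 0 ≤ p ω) (hp1 : ∑ ω, p ω = 1)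
    (W : ∀ i, Ω → V i) (α : ℝ) (hshare : ∀ i, entropy b p (W i) ≤ α)
    {A : Finset (Fin n)} (hA : A.Nonempty) :
    entropy b p (tupleOn W A) ≤ A.card * α := by
  induction hA using Finset.Nonempty.cons_induction with
  | singleton i =>
      have he : Function.Injective
          (fun f : (∀ j : ({i} : Finset (Fin n)), V j) => f ⟨i, Finset.mem_singleton_self i⟩) := by
        intro f g h
        funext j
        rcases j with ⟨jv, jp⟩
        have : jv = i := Finset.mem_singleton.mp jp
        subst this
        exact h
      have h2 : entropy b p (W i)
          = entropy b p (tupleOn W {i}) :=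
        entropy_comp_injective (b := b) (p := p) he (tupleOn W {i})
      rw [← h2]
      simpa using hshare i
  | cons i A hi hA ih =>
      have he : Function.Injective
          (fun f : (∀ j : (Finset.cons i A hi : Finset (Fin n)), V j) =>
            (f ⟨i, Finset.mem_cons_self i A⟩,
             fun j : A => f ⟨j.1, Finset.mem_cons.mpr (Or.inr j.2)⟩)) := by
        intro f g h
        funext j
        rcases j with ⟨jv, jp⟩
        rcases Finset.mem_cons.mp jp with rfl | hjA
        · exact congrArg Prod.fst h
        · exact congrFun (congrArg Prod.snd h) ⟨jv, hjA⟩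
      have h1 : entropy b p (fun ω => (W i ω, tupleOn W A ω))
          = entropy b p (tupleOn W (Finset.cons i A hi)) :=
        entropy_comp_injective (b := b) (p := p) he (tupleOn W (Finset.cons i A hi))
      have h2 := entropy_pair_le hb hp hp1 (W i) (tupleOn W A)
      have h3 := hshare i
      have hcard : ((Finset.cons i A hi).card : ℝ) = (A.card : ℝ) + 1 := by
        rw [Finset.card_cons]
        push_cast
        ring
      rw [← h1, hcard]
      have := ih
      nlinarith [ih, h2, h3]

end Helpers

/-- Converse for the limited-knowledge adversary (secret-size part of Theorem 1):
if any `z_r = z_ro + z_rw` shares are independent of the secret, the user can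
decode from any `k - z_w` shares (after discarding the `z_w = z_wo + z_rw`
corrupted shares among any `k` contacted ones), and each share has entropy at
most `α`, then `H(S) ≤ (k - 2z_rw - z_wo - z_ro)·α`. -/
theorem limited_knowledge_converse_secret_size
    {Ω : Type*} [Fintype Ω] (b : ℝ) (hb : 1 < b)
    (p : Ω → ℝ) (hp : ∀ ω, 0 ≤ p ω) (hp1 : ∑ ω, p ω = 1)
    {σ : Type*} [Fintype σ] [DecidableEq σ] (S : Ω → σ)
    (n k zro zwo zrw : ℕ) (hkn : k ≤ n) (hk : 2 * zrw + 2 * zwo + zro < k)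
    {V : Fin n → Type*} [∀ i, Fintype (V i)] [∀ i, DecidableEq (V i)]
    (W : ∀ i, Ω → V i)
    (α : ℝ) (hα : 0 ≤ α)
    (hshare : ∀ i, entropy b p (W i) ≤ α)
    (hpriv : ∀ Z : Finset (Fin n), Z.card = zro + zrw →
      condEntropy b p S (tupleOn W Z) = entropy b p S)
    (hdec : ∀ B : Finset (Fin n), B.card = k - (zwo + zrw) →
      condEntropy b p S (tupleOn W B) = 0) :
    entropy b p S ≤ ((k : ℝ) - 2 * (zrw : ℝ) - (zwo : ℝ) - (zro : ℝ)) * α := by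
  have hkw : k - (zwo + zrw) ≤ n := by omega
  obtain ⟨B, -, hBcard⟩ := Finset.exists_subset_card_eq (s := (Finset.univ : Finset (Fin n)))
    (n := k - (zwo + zrw)) (by simpa using hkw)
  obtain ⟨Z, hZB, hZcard⟩ := Finset.exists_subset_card_eq (s := B) (n := zro + zrw) (by omega)
  set A := B \ Z with hAdef
  have hAcard : A.card = k - (zwo + zrw) - (zro + zrw) := by
    rw [hAdef, Finset.card_sdiff_of_subset hZB, hBcard, hZcard]
  have hApos : 0 < A.card := by omega
  have h1 : entropy b p S
      = entropy b p (fun ω => (S ω, tupleOn W Z ω)) - entropy b p (tupleOn W Z) := by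
    have := hpriv Z hZcard
    unfold condEntropy at this
    linarith
  have h2 : entropy b p (fun ω => (S ω, tupleOn W Z ω))
      ≤ entropy b p (fun ω => (S ω, tupleOn W B ω)) := by
    have := entropy_comp_le hb hp
      (fun sf : σ × (∀ j : B, V j) => (sf.1, fun j : Z => sf.2 ⟨j.1, hZB j.2⟩))
      (fun ω => (S ω, tupleOn W B ω))
    exact this
  have h3 : entropy b p (fun ω => (S ω, tupleOn W B ω)) = entropy b p (tupleOn W B) := by
    have := hdec B hBcard
    unfold condEntropy at this
    linarith
  have hAB : ∀ j : Fin n, j ∈ A → j ∈ B := fun j hj => (Finset.mem_sdiff.mp hj).1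
  have h4 : entropy b p (tupleOn W B)
      = entropy b p (fun ω => (tupleOn W A ω, tupleOn W Z ω)) := by
    have he : Function.Injective (fun f : (∀ j : B, V j) =>
        ((fun j : A => f ⟨j.1, hAB j.1 j.2⟩), (fun j : Z => f ⟨j.1, hZB j.2⟩))) := by
      intro f g h
      funext j
      rcases j with ⟨jv, jp⟩
      by_cases hz : jv ∈ Z
      · exact congrFun (congrArg Prod.snd h) ⟨jv, hz⟩
      · have hjA : jv ∈ A := Finset.mem_sdiff.mpr ⟨jp, hz⟩
        exact congrFun (congrArg Prod.fst h) ⟨jv, hjA⟩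
    exact (entropy_comp_injective (b := b) (p := p) he (tupleOn W B)).symm
  have h5 := entropy_pair_le hb hp hp1 (tupleOn W A) (tupleOn W Z)
  have h6 : entropy b p (tupleOn W A) ≤ A.card * α :=
    entropy_tupleOn_le hb hp hp1 W α hshare (Finset.card_pos.mp hApos)
  have hcast : (A.card : ℝ) = (k : ℝ) - 2 * zrw - zwo - zro := by
    have hc : A.card = k - (2 * zrw + zwo + zro) := by omega
    rw [hc, Nat.cast_sub (by omega)]
    push_cast
    ring
  rw [hcast] at h6
  linarith
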